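/- Let 0 < α < 2 and n ≥ 1. For every s ≥ 2, ((s^α − (s² − 1)^(α/2)) / ((s² − 1)^(α/2) · s^α)) · s ≤ C / s^(1+α) for some constant C depending only on α. -/
import Mathlib


theorem stmt_4 (α : ℝ) (hα0 : 0 < α) (hα2 : α < 2) (n : ℕ) (hn : 1 ≤ n) :
    ∃ C > (0:ℝ), ∀ s : ℝ, 2 ≤ s →
      (s ^ α - (s ^ 2 - 1) ^ (α / 2) ) / ((s ^ 2 - 1) ^ (α / 2) * s ^ α) * s ≤ C / s ^ (1 + α) := by
  refine ⟨2, by norm_num, ?_⟩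
  intro s hs
  have hs0 : (0:ℝ) < s := by linarith
  have hsq : (0:ℝ) < s ^ 2 := by positivity
  have hs2 : (0:ℝ) < s ^ 2 - 1 := by nlinarith
  set A := (s ^ 2 - 1) ^ (α / 2) with hAdef
  have hA : (0:ℝ) < A := Real.rpow_pos_of_pos hs2 _
  have hB : (0:ℝ) < s ^ α := Real.rpow_pos_of_pos hs0 _
  have hBeq : s ^ α = (s ^ 2 : ℝ) ^ (α / 2) := by
    rw [← Real.rpow_natCast s 2, ← Real.rpow_mul hs0.le]
    norm_num [mul_div_cancel₀]
  -- key1 : s^α * (s^2 - 1) ≤ A * s^2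
  have hx1 : ((s ^ 2 - 1) / s ^ 2 : ℝ) ≤ ((s ^ 2 - 1) / s ^ 2) ^ (α / 2) := by
    have := Real.rpow_le_rpow_of_exponent_ge (x := (s ^ 2 - 1) / s ^ 2)
      (by positivity) (by rw [div_le_one hsq]; linarith) (y := 1) (z := α / 2) (by linarith)
    rwa [Real.rpow_one] at this
  have hx2 : ((s ^ 2 - 1) / s ^ 2 : ℝ) ^ (α / 2) = A / s ^ α := by
    rw [Real.div_rpow hs2.le hsq.le, hBeq]
  have key1 : s ^ α * (s ^ 2 - 1) ≤ A * s ^ 2 := by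
    have h := hx1
    rw [hx2, div_le_div_iff₀ hsq hB] at h
    linarith [h]
  -- key2 : s^α ≤ (4/3) * A
  have h34 : ((3:ℝ)/4) * s ^ 2 ≤ s ^ 2 - 1 := by nlinarith
  have hA1 : ((3:ℝ)/4 * s ^ 2) ^ (α / 2) ≤ A := by
    exact Real.rpow_le_rpow (by positivity) h34 (by linarith)
  have hA2 : ((3:ℝ)/4 * s ^ 2) ^ (α / 2) = (3/4 : ℝ) ^ (α / 2) * s ^ α := by
    rw [Real.mul_rpow (by norm_num) hsq.le, hBeq]
  have h34r : (3/4 : ℝ) ≤ (3/4 : ℝ) ^ (α / 2) := by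
    have := Real.rpow_le_rpow_of_exponent_ge (x := (3:ℝ)/4) (by norm_num) (by norm_num)
      (y := 1) (z := α / 2) (by linarith)
    rwa [Real.rpow_one] at this
  have key2 : s ^ α ≤ (4/3 : ℝ) * A := by
    have : (3/4 : ℝ) * s ^ α ≤ A := by
      calc (3/4 : ℝ) * s ^ α ≤ (3/4 : ℝ) ^ (α / 2) * s ^ α := by nlinarith
        _ = ((3:ℝ)/4 * s ^ 2) ^ (α / 2) := hA2.symm
        _ ≤ A := hA1
    linarith
  -- finish
  have hpow : s ^ (1 + α) = s * s ^ α := by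
    rw [Real.rpow_add hs0, Real.rpow_one]
  rw [hpow, div_mul_eq_mul_div, div_le_div_iff₀ (by positivity) (by positivity)]
  nlinarith [mul_le_mul_of_nonneg_right key1 hB.le, mul_le_mul_of_nonneg_right key2 hB.le,
    mul_pos hA hB, mul_pos hs0 hB]
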